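/- arXiv:1312.3582 — 2 statements merged into one kernel-verified Lean document; each statement's English description precedes it below -/
import Mathlib

section
/- Consider a sparsity level s and weights ω with ω_j ≥ 1 satisfying s ≥ 2‖ω‖_∞². If A satisfies the ω-RIP of order s with constant δ_{ω,s}, then for every x ∈ C^N, ‖Ax‖₂ ≤ √(1+δ_{ω,s}) ( ‖x‖₂ + (2/√s) ‖x‖_{ω,1} ). -/
open Finset

/-- ℓ2 norm of a finitely-indexed complex vector. -/
noncomputable def l2 {n : ℕ} (x : Fin n → ℂ) : ℝ := Real.sqrt (∑ j, ‖x j‖ ^ 2)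

/-- ℓ1 norm. -/
noncomputable def l1 {n : ℕ} (x : Fin n → ℂ) : ℝ := ∑ j, ‖x j‖

/-- Support of a vector as a finset. -/
noncomputable def spt {n : ℕ} (x : Fin n → ℂ) : Finset (Fin n) := Finset.univ.filter (fun j => x j ≠ 0)

/-- Weighted ℓ0 "norm" ‖x‖_{ω,0} = ∑_{j : x_j ≠ 0} ω_j². -/
noncomputable def wnorm0 {n : ℕ} (ω : Fin n → ℝ) (x : Fin n → ℂ) : ℝ :=
  ∑ j ∈ spt x, (ω j) ^ 2

/-- Weighted ℓ1 norm ‖x‖_{ω,1} = ∑_j |x_j| ω_j. -/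
noncomputable def wl1 {n : ℕ} (ω : Fin n → ℝ) (x : Fin n → ℂ) : ℝ := ∑ j, ‖x j‖ * ω j

/-- Weighted cardinality of an index set. -/
noncomputable def wcard {n : ℕ} (ω : Fin n → ℝ) (S : Finset (Fin n)) : ℝ := ∑ j ∈ S, (ω j) ^ 2

/-- Restriction of a vector to an index set (zeroing the other coordinates). -/
def restr {n : ℕ} (S : Finset (Fin n)) (x : Fin n → ℂ) : Fin n → ℂ :=
  fun j => if j ∈ S then x j else 0

/-!
Order the coordinates by the ratio `|x_j| / ω_j` and cut off a first block `S` of those with the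
largest ratios, of weighted cardinality between `s/2` and `s` (possible because every single
`ω_j² ≤ s/2`). Every ratio outside `S` is at most the weighted average
`‖x_S‖_{ω,1} / ω(S) ≤ 2 ‖x_S‖_{ω,1} / s` over `S`, so the next block, having weighted cardinality
at most `s`, has `ℓ2` norm at most `(2/√s) ‖x_S‖_{ω,1}`. Applying the RIP to each block and the
triangle inequality, the first block contributes `√(1+δ) ‖x‖₂` and the later ones together at most
`√(1+δ) (2/√s) ‖x‖_{ω,1}`.
-/

section WeightedNorms

variable {n : ℕ}

lemma l2_nonneg (x : Fin n → ℂ) : 0 ≤ l2 x := Real.sqrt_nonneg _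

lemma l2_eq_norm_toLp (x : Fin n → ℂ) :
    l2 x = ‖(WithLp.toLp 2 x : EuclideanSpace ℂ (Fin n))‖ :=
  (EuclideanSpace.norm_eq _).symm

lemma l2_add_le (x y : Fin n → ℂ) : l2 (x + y) ≤ l2 x + l2 y := by
  simp only [l2_eq_norm_toLp, WithLp.toLp_add]
  exact norm_add_le _ _

lemma wl1_nonneg {ω : Fin n → ℝ} (hω : ∀ j, 0 ≤ ω j) (x : Fin n → ℂ) : 0 ≤ wl1 ω x :=
  sum_nonneg fun j _ => mul_nonneg (norm_nonneg _) (hω j)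

lemma sum_restr {M : Type*} [AddCommMonoid M] (f : Fin n → ℂ → M) (hf : ∀ j, f j 0 = 0)
    (S : Finset (Fin n)) (x : Fin n → ℂ) :
    ∑ j, f j (restr S x j) = ∑ j ∈ S, f j (x j) := by
  classical
  simp only [restr, apply_ite (f _), hf, sum_ite_mem, univ_inter]

lemma l2_restr (S : Finset (Fin n)) (x : Fin n → ℂ) :
    l2 (restr S x) = √(∑ j ∈ S, ‖x j‖ ^ 2) := by
  rw [l2, sum_restr (fun _ z => ‖z‖ ^ 2) (by simp)]

lemma wl1_restr (ω : Fin n → ℝ) (S : Finset (Fin n)) (x : Fin n → ℂ) :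
    wl1 ω (restr S x) = ∑ j ∈ S, ‖x j‖ * ω j :=
  sum_restr (fun j z => ‖z‖ * ω j) (by simp) S x

lemma restr_add_restr_compl (S : Finset (Fin n)) (x : Fin n → ℂ) :
    restr S x + restr Sᶜ x = x := by
  funext j
  by_cases hj : j ∈ S <;> simp [restr, hj]

lemma wl1_restr_add_restr_compl (ω : Fin n → ℝ) (S : Finset (Fin n)) (x : Fin n → ℂ) :
    wl1 ω (restr S x) + wl1 ω (restr Sᶜ x) = wl1 ω x := by
  simp only [wl1, ← sum_add_distrib]
  refine sum_congr rfl fun j _ => ?_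
  by_cases hj : j ∈ S <;> simp [restr, hj]

lemma restr_spt (x : Fin n → ℂ) : restr (spt x) x = x := by
  funext j
  by_cases hj : x j = 0 <;> simp [restr, spt, hj]

lemma spt_restr_compl (S : Finset (Fin n)) (x : Fin n → ℂ) :
    spt (restr Sᶜ x) = spt x \ S := by
  ext j
  by_cases hj : j ∈ S <;> simp [spt, restr, hj]

lemma wnorm0_restr_le (ω : Fin n → ℝ) (S : Finset (Fin n)) (x : Fin n → ℂ) :
    wnorm0 ω (restr S x) ≤ wcard ω S := by
  refine sum_le_sum_of_subset_of_nonneg (fun j hj => ?_) fun j _ _ => sq_nonneg _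
  by_contra hjS
  simp [spt, restr, hjS] at hj

lemma l2_restr_le (S : Finset (Fin n)) (x : Fin n → ℂ) : l2 (restr S x) ≤ l2 x := by
  rw [l2_restr, l2]
  exact Real.sqrt_le_sqrt
    (sum_le_sum_of_subset_of_nonneg (subset_univ S) fun j _ _ => sq_nonneg _)

lemma l2_restr_le_of_norm_le {ω : Fin n → ℝ} {t : ℝ} (ht : 0 ≤ t) {x : Fin n → ℂ}
    (hx : ∀ j, ‖x j‖ ≤ t * ω j) (S : Finset (Fin n)) :
    l2 (restr S x) ≤ t * √(wcard ω S) := by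
  calc l2 (restr S x) ≤ √(∑ j ∈ S, (t * ω j) ^ 2) := by
        rw [l2_restr]
        gcongr with j
        exact hx j
    _ = t * √(wcard ω S) := by
        simp_rw [mul_pow, ← mul_sum, Real.sqrt_mul (sq_nonneg t), Real.sqrt_sq ht, wcard]

end WeightedNorms

section Blocks

variable {n : ℕ} {ω : Fin n → ℝ}

/-- The coordinates in `S` have the largest ratios `‖x j‖ / ω j`, cross-multiplied. -/
def IsTopRatioSet (ω : Fin n → ℝ) (x : Fin n → ℂ) (S : Finset (Fin n)) : Prop :=
  ∀ j ∉ S, ∀ l ∈ S, ‖x j‖ * ω l ≤ ‖x l‖ * ω j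

lemma exists_max_ratio (hω : ∀ j, 0 < ω j) (x : Fin n → ℂ) {T : Finset (Fin n)}
    (hT : T.Nonempty) : ∃ l ∈ T, ∀ j ∈ T, ‖x j‖ * ω l ≤ ‖x l‖ * ω j := by
  obtain ⟨l, hl, hmax⟩ := T.exists_max_image (fun j => ‖x j‖ / ω j) hT
  exact ⟨l, hl, fun j hj => (div_le_div_iff₀ (hω j) (hω l)).1 (hmax j hj)⟩

lemma IsTopRatioSet.norm_mul_wcard_le (hω : ∀ j, 0 ≤ ω j) {x : Fin n → ℂ}
    {S : Finset (Fin n)} (hS : IsTopRatioSet ω x S) {j : Fin n} (hj : j ∉ S) :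
    ‖x j‖ * wcard ω S ≤ ω j * wl1 ω (restr S x) := by
  rw [wcard, wl1_restr, mul_sum, mul_sum]
  refine sum_le_sum fun l hl => ?_
  calc ‖x j‖ * ω l ^ 2 = ‖x j‖ * ω l * ω l := by ring
    _ ≤ ‖x l‖ * ω j * ω l := mul_le_mul_of_nonneg_right (hS j hj l hl) (hω l)
    _ = ω j * (‖x l‖ * ω l) := by ring

lemma IsTopRatioSet.insert (hω : ∀ j, 0 ≤ ω j) {x : Fin n → ℂ} {S : Finset (Fin n)}
    (hS : IsTopRatioSet ω x S) {l : Fin n}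
    (hl : ∀ j ∈ spt x \ S, ‖x j‖ * ω l ≤ ‖x l‖ * ω j) : IsTopRatioSet ω x (insert l S) := by
  intro j hj k hk
  rw [mem_insert, not_or] at hj
  rcases mem_insert.1 hk with rfl | hk
  · by_cases hxj : x j = 0
    · simpa [hxj] using mul_nonneg (norm_nonneg (x k)) (hω j)
    · exact hl j (mem_sdiff.2 ⟨by simp [spt, hxj], hj.2⟩)
  · exact hS j hj.2 k hk

/-- Take a block of maximal weighted cardinality: if it were neither the whole support nor of
weighted cardinality `≥ s / 2`, the coordinate of next-largest ratio could still be added, as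
`ω_j² ≤ s / 2`. -/
lemma exists_top_ratio_block (hω : ∀ j, 0 < ω j) {s : ℝ} (hs : ∀ j, 2 * ω j ^ 2 ≤ s)
    (hs₀ : 0 ≤ s) (x : Fin n → ℂ) :
    ∃ S ⊆ spt x, wcard ω S ≤ s ∧ IsTopRatioSet ω x S ∧
      (S = spt x ∨ S.Nonempty ∧ s / 2 ≤ wcard ω S) := by
  classical
  set P := (spt x).powerset.filter fun S => wcard ω S ≤ s ∧ IsTopRatioSet ω x S
  have hmemP : ∀ S, S ∈ P ↔ S ⊆ spt x ∧ wcard ω S ≤ s ∧ IsTopRatioSet ω x S := by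
    simp [P]
  have hP : (∅ : Finset (Fin n)) ∈ P := (hmemP ∅).2 ⟨empty_subset _, by simpa [wcard], by
    simp [IsTopRatioSet]⟩
  obtain ⟨S, hSP, hSmax⟩ := P.exists_max_image (wcard ω) ⟨∅, hP⟩
  obtain ⟨hSsub, hScard, hStop⟩ := (hmemP S).1 hSP
  refine ⟨S, hSsub, hScard, hStop, or_iff_not_imp_left.2 fun hne => ?_⟩
  obtain ⟨l, hl, hlmax⟩ :=
    exists_max_ratio hω x (sdiff_nonempty.2 fun h => hne (h.antisymm' hSsub))
  obtain ⟨hlx, hlS⟩ := mem_sdiff.1 hl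
  have hωl : 0 < ω l ^ 2 := pow_pos (hω l) 2
  have hcard_insert : wcard ω (insert l S) = ω l ^ 2 + wcard ω S := sum_insert hlS
  have hhalf : s / 2 ≤ wcard ω S := by
    by_contra! hlt
    have hins : insert l S ∈ P := (hmemP _).2 ⟨insert_subset hlx hSsub,
      by linarith [hs l], hStop.insert (fun j => (hω j).le) hlmax⟩
    linarith [hSmax _ hins]
  exact ⟨nonempty_of_sum_ne_zero (by linarith [hs l] : wcard ω S ≠ 0), hhalf⟩

end Blocks

section RIP

open Matrix

variable {m n : ℕ} {A : Matrix (Fin m) (Fin n) ℂ} {ω : Fin n → ℝ} {s δ : ℝ}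

lemma l2_mulVec_le_of_wnorm0_le
    (hA : ∀ z : Fin n → ℂ, wnorm0 ω z ≤ s → l2 (A *ᵥ z) ^ 2 ≤ (1 + δ) * l2 z ^ 2)
    {z : Fin n → ℂ} (hz : wnorm0 ω z ≤ s) : l2 (A *ᵥ z) ≤ √(1 + δ) * l2 z := by
  calc l2 (A *ᵥ z) = √(l2 (A *ᵥ z) ^ 2) := (Real.sqrt_sq (l2_nonneg _)).symm
    _ ≤ √((1 + δ) * l2 z ^ 2) := Real.sqrt_le_sqrt (hA z hz)
    _ = √(1 + δ) * l2 z := by rw [Real.sqrt_mul' _ (sq_nonneg _), Real.sqrt_sq (l2_nonneg _)]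

lemma exists_block_l2_mulVec_le (hω : ∀ j, 0 < ω j) (hs : ∀ j, 2 * ω j ^ 2 ≤ s) (hs₀ : 0 ≤ s)
    (hA : ∀ z : Fin n → ℂ, wnorm0 ω z ≤ s → l2 (A *ᵥ z) ^ 2 ≤ (1 + δ) * l2 z ^ 2)
    (x : Fin n → ℂ) :
    ∃ S, wcard ω S ≤ s ∧
      l2 (A *ᵥ x) ≤ √(1 + δ) * (l2 (restr S x) + 2 / √s * wl1 ω x) := by
  induction hk : (spt x).card using Nat.strong_induction_on generalizing x with
  | _ k ih =>
    obtain ⟨S, hSsub, hScard, hStop, hfull | ⟨hSne, hhalf⟩⟩ := exists_top_ratio_block hω hs hs₀ x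
    · refine ⟨S, hScard, ?_⟩
      have hAx := l2_mulVec_le_of_wnorm0_le hA ((wnorm0_restr_le ω S x).trans hScard)
      rw [hfull, restr_spt] at hAx ⊢
      have htail : 0 ≤ 2 / √s * wl1 ω x :=
        mul_nonneg (by positivity) (wl1_nonneg (fun j => (hω j).le) x)
      exact hAx.trans
        (mul_le_mul_of_nonneg_left (le_add_of_nonneg_right htail) (Real.sqrt_nonneg _))
    set y := restr S x
    set x' := restr Sᶜ x
    set a := wl1 ω y
    have hcard' : (spt x').card < k :=
      hk ▸ card_lt_card (spt_restr_compl S x ▸ sdiff_ssubset hSsub hSne)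
    obtain ⟨S', hS'card, hx'⟩ := ih _ hcard' x' rfl
    have ht : 0 ≤ 2 * a / s := by positivity [wl1_nonneg (fun j => (hω j).le) y]
    have hx'le : ∀ j, ‖x' j‖ ≤ 2 * a / s * ω j := by
      intro j
      by_cases hj : j ∈ S
      · simpa [x', restr, hj] using mul_nonneg ht (hω j).le
      · have hspos : 0 < s := by linarith [hs j, pow_pos (hω j) 2]
        have hratio := hStop.norm_mul_wcard_le (fun j => (hω j).le) hj
        simp only [x', restr, mem_compl, hj, not_false_eq_true, if_true]
        rw [div_mul_eq_mul_div, le_div_iff₀ hspos]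
        nlinarith [norm_nonneg (x j)]
    have hy' : l2 (restr S' x') ≤ 2 / √s * a :=
      calc l2 (restr S' x') ≤ 2 * a / s * √s :=
            (l2_restr_le_of_norm_le ht hx'le S').trans (by gcongr)
        _ = 2 * a * (√s / s) := by ring
        _ = 2 / √s * a := by rw [Real.sqrt_div_self']; ring
    refine ⟨S, hScard, ?_⟩
    calc l2 (A *ᵥ x) = l2 (A *ᵥ y + A *ᵥ x') := by rw [← mulVec_add, restr_add_restr_compl]
      _ ≤ l2 (A *ᵥ y) + l2 (A *ᵥ x') := l2_add_le _ _
      _ ≤ √(1 + δ) * l2 y + √(1 + δ) * (l2 (restr S' x') + 2 / √s * wl1 ω x') :=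
          add_le_add (l2_mulVec_le_of_wnorm0_le hA ((wnorm0_restr_le ω S x).trans hScard)) hx'
      _ ≤ √(1 + δ) * l2 y + √(1 + δ) * (2 / √s * a + 2 / √s * wl1 ω x') := by gcongr
      _ = √(1 + δ) * (l2 y + 2 / √s * wl1 ω x) := by
          rw [← wl1_restr_add_restr_compl ω S x]
          ring

end RIP

theorem weighted_rip_energy_bound_general {m N : ℕ} (A : Matrix (Fin m) (Fin N) ℂ)
    (ω : Fin N → ℝ) (hω : ∀ j, 1 ≤ ω j) (s : ℝ)
    (hs : ∀ j, 2 * (ω j) ^ 2 ≤ s) (δ : ℝ)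
    (hRIP : ∀ z : Fin N → ℂ, wnorm0 ω z ≤ s →
      (1 - δ) * l2 z ^ 2 ≤ l2 (A.mulVec z) ^ 2 ∧ l2 (A.mulVec z) ^ 2 ≤ (1 + δ) * l2 z ^ 2) :
    ∀ x : Fin N → ℂ,
      l2 (A.mulVec x) ≤ Real.sqrt (1 + δ) * (l2 x + (2 / Real.sqrt s) * wl1 ω x) := by
  intro x
  rcases (spt x).eq_empty_or_nonempty with hx | ⟨j, -⟩
  · have hx0 : x = 0 := by
      rw [← restr_spt x, hx]
      funext j
      simp [restr]
    simp [hx0, l2, wl1]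
  have hs₀ : 0 ≤ s := (by positivity : 0 ≤ 2 * ω j ^ 2).trans (hs j)
  obtain ⟨S, -, hS⟩ := exists_block_l2_mulVec_le (fun j => one_pos.trans_le (hω j)) hs hs₀
    (fun z hz => (hRIP z hz).2) x
  calc l2 (A.mulVec x) ≤ √(1 + δ) * (l2 (restr S x) + 2 / √s * wl1 ω x) := hS
    _ ≤ √(1 + δ) * (l2 x + 2 / √s * wl1 ω x) := by gcongr; exact l2_restr_le S x

/-- Proposition on weighted RIP energy bound: if s ≥ 2‖ω‖_∞² and A
satisfies the ω-RIP of order s, then ‖Ax‖₂ ≤ √(1+δ_{ω,s})(‖x‖₂ + (2/√s)‖x‖_{ω,1}). -/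
theorem weighted_rip_energy_bound {m N : ℕ} (A : Matrix (Fin m) (Fin N) ℂ)
    (ω : Fin N → ℝ) (hω : ∀ j, 1 ≤ ω j) (s : ℝ)
    (hs : ∀ j, 2 * (ω j) ^ 2 ≤ s) (δ : ℝ) (hδ : 0 ≤ δ)
    (hRIP : ∀ z : Fin N → ℂ, wnorm0 ω z ≤ s →
      (1 - δ) * l2 z ^ 2 ≤ l2 (A.mulVec z) ^ 2 ∧ l2 (A.mulVec z) ^ 2 ≤ (1 + δ) * l2 z ^ 2) :
    ∀ x : Fin N → ℂ,
      l2 (A.mulVec x) ≤ Real.sqrt (1 + δ) * (l2 x + (2 / Real.sqrt s) * wl1 ω x) :=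
  weighted_rip_energy_bound_general A ω hω s hs δ hRIP
end

section
/- With the notation of the IHWT iteration and ω-RIP constant δ_{ω,3s} < 1/√32, the residuals r^n = x^s − x^n satisfy the one-step recursion ‖r^{n+1}‖₂ ≤ 0.5 ‖r^n‖₂ + 2.17 ‖A x_{S̄} + e‖₂. -/
open Finset

/-!
Write `T` for the union of the supports of `xˢ`, `xⁿ` and `xⁿ⁺¹`; its weighted cardinality is at most
`3s`, so `A` is a restricted isometry with constant `δ` on the subspace `V_T` of vectors supported
in `T`, and all the estimates take place after projecting orthogonally onto `V_T`. With
`g = xⁿ + A*(y - Axⁿ)` and `e' = A x_{S̄} + e` one has `xˢ - g = (I - A*A) rⁿ - A* e'`. Compressed to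
`V_T`, `I - A*A` has norm at most `δ` (by polarization) and `A*` at most `√(1 + δ)`. Since
`xⁿ⁺¹` is at least as close to `g` as `xˢ`, and both vanish off `T`, the same holds after
projecting, whence `‖rⁿ⁺¹‖ ≤ 2 ‖P_T (xˢ - g)‖ ≤ 2δ ‖rⁿ‖ + 2√(1 + δ) ‖e'‖`. Finally
`δ < 1/√32 < 0.177` gives `2δ ≤ 0.5` and `2√(1 + δ) ≤ 2.17`.
-/

open scoped InnerProductSpace
open RCLike

theorem le_of_sq_le_mul {a c : ℝ} (hc : 0 ≤ c) (h : a ^ 2 ≤ c * a) : a ≤ c := by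
  nlinarith

section RestrictedIsometry

variable {𝕜 E F : Type*} [RCLike 𝕜]
  [NormedAddCommGroup E] [InnerProductSpace 𝕜 E] [NormedAddCommGroup F] [InnerProductSpace 𝕜 F]

theorem Submodule.norm_starProjection_le_of_sub_mem (K : Submodule 𝕜 E)
    [K.HasOrthogonalProjection] {a b : E} (hab : a - b ∈ K) (h : ‖a‖ ≤ ‖b‖) :
    ‖K.starProjection a‖ ≤ ‖K.starProjection b‖ := by
  have hperp : Kᗮ.starProjection a = Kᗮ.starProjection b := by
    rw [← sub_eq_zero, ← map_sub]; exact starProjection_orthogonal_apply_eq_zero hab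
  have ha := K.norm_sq_eq_add_norm_sq_starProjection a
  have hb := K.norm_sq_eq_add_norm_sq_starProjection b
  rw [hperp] at ha
  have : ‖a‖ ^ 2 ≤ ‖b‖ ^ 2 := by gcongr
  exact le_of_sq_le_sq (by linarith) (norm_nonneg _)

theorem Submodule.norm_starProjection_sq (K : Submodule 𝕜 E) [K.HasOrthogonalProjection] (g : E) :
    ‖K.starProjection g‖ ^ 2 = re ⟪K.starProjection g, g⟫_𝕜 := by
  rw [re_inner_starProjection_eq_normSq, starProjection_apply, Submodule.coe_norm]

def RestrictedIsometryOn (A : E →ₗ[𝕜] F) (K : Submodule 𝕜 E) (δ : ℝ) : Prop :=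
  ∀ z ∈ K, (1 - δ) * ‖z‖ ^ 2 ≤ ‖A z‖ ^ 2 ∧ ‖A z‖ ^ 2 ≤ (1 + δ) * ‖z‖ ^ 2

namespace RestrictedIsometryOn

variable {A : E →ₗ[𝕜] F} {K : Submodule 𝕜 E} {δ : ℝ}

theorem mono (h : RestrictedIsometryOn A K δ) {δ' : ℝ} (hδ : δ ≤ δ') :
    RestrictedIsometryOn A K δ' := fun z hz =>
  have hz2 : 0 ≤ ‖z‖ ^ 2 := sq_nonneg _
  ⟨by nlinarith [(h z hz).1], by nlinarith [(h z hz).2]⟩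

theorem norm_apply_le (h : RestrictedIsometryOn A K δ) {z : E} (hz : z ∈ K) :
    ‖A z‖ ≤ √(1 + δ) * ‖z‖ := by
  rw [← Real.sqrt_sq (norm_nonneg (A z)), ← Real.sqrt_sq (norm_nonneg z), ← Real.sqrt_mul']
  · exact Real.sqrt_le_sqrt (h z hz).2
  · positivity

theorem re_inner_sub_re_inner_le_half (h : RestrictedIsometryOn A K δ) {u v : E}
    (hu : u ∈ K) (hv : v ∈ K) :
    re ⟪u, v⟫_𝕜 - re ⟪A u, A v⟫_𝕜 ≤ δ / 2 * (‖u‖ ^ 2 + ‖v‖ ^ 2) := by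
  have hpar := parallelogram_law_with_norm 𝕜 u v
  have hadd := (h _ (K.add_mem hu hv)).1
  have hsub := (h _ (K.sub_mem hu hv)).2
  rw [re_inner_eq_norm_add_mul_self_sub_norm_sub_mul_self_div_four,
    re_inner_eq_norm_add_mul_self_sub_norm_sub_mul_self_div_four, ← map_add, ← map_sub]
  linear_combination (δ / 4) * hpar + hadd / 4 + hsub / 4

-- rescaling `u` and `v` to equal norms turns the arithmetic mean into the geometric one
theorem re_inner_sub_re_inner_le (h : RestrictedIsometryOn A K δ) {u v : E}
    (hu : u ∈ K) (hv : v ∈ K) :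
    re ⟪u, v⟫_𝕜 - re ⟪A u, A v⟫_𝕜 ≤ δ * ‖u‖ * ‖v‖ := by
  rcases eq_or_ne u 0 with rfl | hu0
  · simp
  rcases eq_or_ne v 0 with rfl | hv0
  · simp
  have hscaled := h.re_inner_sub_re_inner_le_half (K.smul_mem (‖v‖ : 𝕜) hu)
    (K.smul_mem (‖u‖ : 𝕜) hv)
  simp only [map_smul, inner_smul_left, inner_smul_right, norm_smul, conj_ofReal,
    ← mul_assoc, ← ofReal_mul, re_ofReal_mul, norm_ofReal, abs_norm] at hscaled
  have hpos : 0 < ‖u‖ * ‖v‖ := by positivity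
  nlinarith

variable [FiniteDimensional 𝕜 E] [FiniteDimensional 𝕜 F] [K.HasOrthogonalProjection]

theorem norm_starProjection_adjoint_le (h : RestrictedIsometryOn A K δ) (w : F) :
    ‖K.starProjection (A.adjoint w)‖ ≤ √(1 + δ) * ‖w‖ := by
  set v := K.starProjection (A.adjoint w)
  have hv : v ∈ K := K.starProjection_apply_mem _
  refine le_of_sq_le_mul (by positivity) ?_
  calc ‖v‖ ^ 2 = re ⟪v, A.adjoint w⟫_𝕜 := K.norm_starProjection_sq _
    _ = re ⟪A v, w⟫_𝕜 := by rw [LinearMap.adjoint_inner_right]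
    _ ≤ ‖A v‖ * ‖w‖ := re_inner_le_norm _ _
    _ ≤ √(1 + δ) * ‖v‖ * ‖w‖ := by gcongr; exact h.norm_apply_le hv
    _ = √(1 + δ) * ‖w‖ * ‖v‖ := by ring

theorem norm_starProjection_sub_adjoint_apply_le (h : RestrictedIsometryOn A K δ)
    (hδ : 0 ≤ δ) {r : E} (hr : r ∈ K) :
    ‖K.starProjection (r - A.adjoint (A r))‖ ≤ δ * ‖r‖ := by
  set v := K.starProjection (r - A.adjoint (A r))
  have hv : v ∈ K := K.starProjection_apply_mem _
  refine le_of_sq_le_mul (by positivity) ?_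
  calc ‖v‖ ^ 2 = re ⟪v, r - A.adjoint (A r)⟫_𝕜 := K.norm_starProjection_sq _
    _ = re ⟪v, r⟫_𝕜 - re ⟪A v, A r⟫_𝕜 := by
      rw [inner_sub_right, map_sub, LinearMap.adjoint_inner_right]
    _ ≤ δ * ‖r‖ * ‖v‖ := by linarith [h.re_inner_sub_re_inner_le hv hr]

theorem norm_sub_le_of_norm_gradientStep_sub_le (h : RestrictedIsometryOn A K δ) (hδ : 0 ≤ δ)
    {xs u u' : E} (hxs : xs ∈ K) (hu : u ∈ K) (hu' : u' ∈ K) (e : F)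
    (hmin : ‖u + A.adjoint (A (xs - u) + e) - u'‖ ≤ ‖u + A.adjoint (A (xs - u) + e) - xs‖) :
    ‖xs - u'‖ ≤ 2 * δ * ‖xs - u‖ + 2 * √(1 + δ) * ‖e‖ := by
  set g := u + A.adjoint (A (xs - u) + e)
  have hres : xs - g = (xs - u - A.adjoint (A (xs - u))) - A.adjoint e := by
    simp only [g, map_add]; abel
  have hclose : ‖K.starProjection (g - u')‖ ≤ ‖K.starProjection (xs - g)‖ := by
    rw [← norm_neg (K.starProjection (xs - g)), ← map_neg, neg_sub]
    exact K.norm_starProjection_le_of_sub_mem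
      (by rw [sub_sub_sub_cancel_left]; exact K.sub_mem hxs hu') hmin
  have hfar : ‖K.starProjection (xs - g)‖ ≤ δ * ‖xs - u‖ + √(1 + δ) * ‖e‖ := by
    rw [hres, map_sub]
    exact (norm_sub_le _ _).trans (add_le_add
      (h.norm_starProjection_sub_adjoint_apply_le hδ (K.sub_mem hxs hu))
      (h.norm_starProjection_adjoint_le e))
  calc ‖xs - u'‖ = ‖K.starProjection (xs - g) + K.starProjection (g - u')‖ := by
        rw [← map_add, sub_add_sub_cancel, K.starProjection_eq_self_iff.mpr (K.sub_mem hxs hu')]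
    _ ≤ ‖K.starProjection (xs - g)‖ + ‖K.starProjection (g - u')‖ := norm_add_le _ _
    _ ≤ 2 * δ * ‖xs - u‖ + 2 * √(1 + δ) * ‖e‖ := by linarith

end RestrictedIsometryOn
end RestrictedIsometry

def supportedIn {ι 𝕜 : Type*} [Fintype ι] [RCLike 𝕜] (T : Set ι) :
    Submodule 𝕜 (EuclideanSpace 𝕜 ι) where
  carrier := {z | ∀ j ∉ T, z j = 0}
  add_mem' hu hv j hj := by simp [hu j hj, hv j hj]
  zero_mem' _ _ := rfl
  smul_mem' c _ hz j hj := by simp [hz j hj]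

section WeightedSparsity

variable {n : ℕ}

theorem l2_eq_norm (x : Fin n → ℂ) : l2 x = ‖WithLp.toLp 2 x‖ := by
  simp [l2, EuclideanSpace.norm_eq]

theorem wnorm0_nonneg (ω : Fin n → ℝ) (x : Fin n → ℂ) : 0 ≤ wnorm0 ω x :=
  sum_nonneg fun _ _ => sq_nonneg _

theorem wnorm0_le_wcard (ω : Fin n → ℝ) {x : Fin n → ℂ} {T : Finset (Fin n)} (h : spt x ⊆ T) :
    wnorm0 ω x ≤ wcard ω T :=
  sum_le_sum_of_subset_of_nonneg h fun _ _ _ => sq_nonneg _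

theorem wcard_union_le (ω : Fin n → ℝ) (S T : Finset (Fin n)) :
    wcard ω (S ∪ T) ≤ wcard ω S + wcard ω T :=
  le_of_add_le_of_nonneg_left (sum_union_inter (f := fun j => ω j ^ 2)).le
    (sum_nonneg fun _ _ => sq_nonneg _)

theorem wcard_spt_union_le_three_mul (ω : Fin n → ℝ) {x₁ x₂ x₃ : Fin n → ℂ} {s : ℝ}
    (h₁ : wnorm0 ω x₁ ≤ s) (h₂ : wnorm0 ω x₂ ≤ s) (h₃ : wnorm0 ω x₃ ≤ s) :
    wcard ω (spt x₁ ∪ spt x₂ ∪ spt x₃) ≤ 3 * s := by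
  change wcard ω (spt x₁) ≤ s at h₁
  change wcard ω (spt x₂) ≤ s at h₂
  change wcard ω (spt x₃) ≤ s at h₃
  linarith [wcard_union_le ω (spt x₁ ∪ spt x₂) (spt x₃), wcard_union_le ω (spt x₁) (spt x₂)]

theorem toLp_mem_supportedIn_of_spt_subset {x : Fin n → ℂ} {T : Finset (Fin n)} (h : spt x ⊆ T) :
    WithLp.toLp 2 x ∈ supportedIn (T : Set (Fin n)) := fun j hj => by
  by_contra hx
  exact hj (h (by simpa [spt] using hx))

theorem spt_ofLp_subset_of_mem_supportedIn {z : EuclideanSpace ℂ (Fin n)} {T : Finset (Fin n)}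
    (hz : z ∈ supportedIn (T : Set (Fin n))) : spt (WithLp.ofLp z) ⊆ T := fun j hj => by
  by_contra hjT
  simp [spt, hz j hjT] at hj

theorem l2_add_conjTranspose_mulVec_sub {m : ℕ} (A : Matrix (Fin m) (Fin n) ℂ) (u v : Fin n → ℂ)
    (w : Fin m → ℂ) :
    l2 (fun j => (u j + A.conjTranspose.mulVec w j) - v j) =
      ‖WithLp.toLp 2 u + (Matrix.toEuclideanLin A).adjoint (WithLp.toLp 2 w) - WithLp.toLp 2 v‖ := by
  rw [l2_eq_norm, ← Matrix.toEuclideanLin_conjTranspose_eq_adjoint]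
  rfl

theorem restrictedIsometryOn_supportedIn {m : ℕ} {A : Matrix (Fin m) (Fin n) ℂ} {ω : Fin n → ℝ}
    {t δ : ℝ} (hRIP : ∀ z : Fin n → ℂ, wnorm0 ω z ≤ t →
      (1 - δ) * l2 z ^ 2 ≤ l2 (A.mulVec z) ^ 2 ∧ l2 (A.mulVec z) ^ 2 ≤ (1 + δ) * l2 z ^ 2)
    {T : Finset (Fin n)} (hT : wcard ω T ≤ t) :
    RestrictedIsometryOn (Matrix.toEuclideanLin A) (supportedIn (T : Set (Fin n))) δ :=
  fun z hz => by
    have h := hRIP _ ((wnorm0_le_wcard ω (spt_ofLp_subset_of_mem_supportedIn hz)).trans hT)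
    rw [l2_eq_norm, l2_eq_norm, WithLp.toLp_ofLp] at h
    exact h

end WeightedSparsity

theorem one_div_sqrt_32_le : 1 / √32 ≤ (0.177 : ℝ) := by
  have h : (5.65 : ℝ) ≤ √32 := Real.le_sqrt_of_sq_le (by norm_num)
  rw [div_le_iff₀ (by positivity)]
  linarith

theorem ihwt_one_step_general {m N : ℕ} (A : Matrix (Fin m) (Fin N) ℂ)
    (ω : Fin N → ℝ) (s : ℝ)
    (x : Fin N → ℂ) (e y : Fin m → ℂ) (hy : y = fun i => A.mulVec x i + e i)
    (xs : Fin N → ℂ) (hxs_sparse : wnorm0 ω xs ≤ s)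
    (δ : ℝ) (hδ : δ < 1 / Real.sqrt 32)
    (hRIP : ∀ z : Fin N → ℂ, wnorm0 ω z ≤ 3 * s →
      (1 - δ) * l2 z ^ 2 ≤ l2 (A.mulVec z) ^ 2 ∧ l2 (A.mulVec z) ^ 2 ≤ (1 + δ) * l2 z ^ 2)
    (X : ℕ → Fin N → ℂ) (hX0 : X 0 = 0)
    (hX : ∀ n, wnorm0 ω (X (n + 1)) ≤ s ∧
      ∀ z : Fin N → ℂ, wnorm0 ω z ≤ s →
        l2 (fun j => (X n j + A.conjTranspose.mulVec (fun i => y i - A.mulVec (X n) i) j) - X (n + 1) j) ≤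
        l2 (fun j => (X n j + A.conjTranspose.mulVec (fun i => y i - A.mulVec (X n) i) j) - z j)) :
    ∀ n : ℕ,
      l2 (fun j => xs j - X (n + 1) j) ≤
        0.5 * l2 (fun j => xs j - X n j) +
          2.17 * l2 (fun i => A.mulVec (fun j => x j - xs j) i + e i) := by
  intro n
  have hsparse : ∀ k, wnorm0 ω (X k) ≤ s := by
    rintro (_ | k)
    · simpa [hX0, wnorm0, spt] using (wnorm0_nonneg ω xs).trans hxs_sparse
    · exact (hX k).1
  set T := spt xs ∪ spt (X n) ∪ spt (X (n + 1))
  -- a negative `δ` would only strengthen the hypothesis, so we may take `δ ≥ 0`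
  set δ' := max δ 0
  have hRIPT : RestrictedIsometryOn (Matrix.toEuclideanLin A) (supportedIn (T : Set (Fin N))) δ' :=
    (restrictedIsometryOn_supportedIn hRIP (wcard_spt_union_le_three_mul ω hxs_sparse
      (hsparse n) (hsparse (n + 1)))).mono (le_max_left δ 0)
  set E := A.mulVec (x - xs) + e
  have hresidual : (fun i => y i - A.mulVec (X n) i) = A.mulVec (xs - X n) + E := by
    funext i
    simp only [hy, E, Matrix.mulVec_sub, Pi.add_apply, Pi.sub_apply]
    ring
  have hmin := (hX n).2 xs hxs_sparse
  rw [hresidual, l2_add_conjTranspose_mulVec_sub, l2_add_conjTranspose_mulVec_sub] at hmin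
  have hstep := hRIPT.norm_sub_le_of_norm_gradientStep_sub_le (le_max_right δ 0)
    (toLp_mem_supportedIn_of_spt_subset (subset_union_left.trans subset_union_left))
    (toLp_mem_supportedIn_of_spt_subset (subset_union_right.trans subset_union_left))
    (toLp_mem_supportedIn_of_spt_subset subset_union_right) _ hmin
  have hδ' : δ' ≤ 0.177 := max_le (hδ.le.trans one_div_sqrt_32_le) (by norm_num)
  have hsqrt : √(1 + δ') ≤ 1.085 := Real.sqrt_le_iff.mpr ⟨by norm_num, by linarith⟩
  calc l2 (fun j => xs j - X (n + 1) j) = ‖WithLp.toLp 2 xs - WithLp.toLp 2 (X (n + 1))‖ :=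
        l2_eq_norm _
    _ ≤ 2 * δ' * ‖WithLp.toLp 2 xs - WithLp.toLp 2 (X n)‖ + 2 * √(1 + δ') * ‖WithLp.toLp 2 E‖ :=
        hstep
    _ ≤ 0.5 * l2 (xs - X n) + 2.17 * l2 E := by
        rw [l2_eq_norm, l2_eq_norm, WithLp.toLp_sub]
        gcongr <;> linarith

/-- IHWT one-step contraction: the residuals r^n = x^s − x^n satisfy
‖r^{n+1}‖₂ ≤ 0.5‖r^n‖₂ + 2.17‖A x_{S̄} + e‖₂. -/
theorem ihwt_one_step {m N : ℕ} (A : Matrix (Fin m) (Fin N) ℂ)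
    (ω : Fin N → ℝ) (hω : ∀ j, 1 ≤ ω j) (s : ℝ)
    (x : Fin N → ℂ) (e y : Fin m → ℂ) (hy : y = fun i => A.mulVec x i + e i)
    (xs : Fin N → ℂ) (hxs_sparse : wnorm0 ω xs ≤ s)
    (hxs_best : ∀ z : Fin N → ℂ, wnorm0 ω z ≤ s →
      l2 (fun j => x j - xs j) ≤ l2 (fun j => x j - z j))
    (δ : ℝ) (hδ : δ < 1 / Real.sqrt 32)
    (hRIP : ∀ z : Fin N → ℂ, wnorm0 ω z ≤ 3 * s →
      (1 - δ) * l2 z ^ 2 ≤ l2 (A.mulVec z) ^ 2 ∧ l2 (A.mulVec z) ^ 2 ≤ (1 + δ) * l2 z ^ 2)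
    (X : ℕ → Fin N → ℂ) (hX0 : X 0 = 0)
    (hX : ∀ n, wnorm0 ω (X (n + 1)) ≤ s ∧
      ∀ z : Fin N → ℂ, wnorm0 ω z ≤ s →
        l2 (fun j => (X n j + A.conjTranspose.mulVec (fun i => y i - A.mulVec (X n) i) j) - X (n + 1) j) ≤
        l2 (fun j => (X n j + A.conjTranspose.mulVec (fun i => y i - A.mulVec (X n) i) j) - z j)) :
    ∀ n : ℕ,
      l2 (fun j => xs j - X (n + 1) j) ≤
        0.5 * l2 (fun j => xs j - X n j) +
          2.17 * l2 (fun i => A.mulVec (fun j => x j - xs j) i + e i) :=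
  ihwt_one_step_general A ω s x e y hy xs hxs_sparse δ hδ hRIP X hX0 hX
end
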